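/- Fix V ≠ 0, δ ∈ ℝ, and 0 < A_− ≤ A_+. Then for every k ∈ ℂ with Im k > 0 that does not lie on either vertical segment Σ_± = ∓V/2 + i[−A_±, A_±], one has (λ_+(k) − (k + V/2))·A_−·e^{−iδ} + (λ_−(k) + (k − V/2))·A_+·e^{iδ} ≠ 0. (This quantity is, up to a nonvanishing factor, the analytic scattering coefficient s₂₂(k) of the pure two-sided step initial condition; its nonvanishing in the upper half plane off the branch cuts means the Riemann problem has no discrete eigenvalues.) -/

import Mathlib

/-- The argument of a complex number normalized to lie in `[−π/2, 3π/2)`: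
if `arg z ∈ (−π, −π/2)` we add `2π`. -/
noncomputable def argS (z : ℂ) : ℝ :=
  if Complex.arg z < -(Real.pi / 2) then Complex.arg z + 2 * Real.pi else Complex.arg z

/-- The branch `λ(k;A) = √(r₁r₂)·exp(i(φ₁+φ₂)/2)` of `(k² + A²)^{1/2}`, where
`k − iA = r₁e^{iφ₁}`, `k + iA = r₂e^{iφ₂}` with `φ₁, φ₂ ∈ [−π/2, 3π/2)`;
its branch cut lies along the segment `i[−A,A]` and it is continuous from the
right on the cut. -/
noncomputable def lamBr (A : ℝ) (k : ℂ) : ℂ :=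
  ((Real.sqrt (‖k - Complex.I * (A : ℂ)‖ * ‖k + Complex.I * (A : ℂ)‖) : ℝ) : ℂ) *
    Complex.exp (Complex.I *
      (((argS (k - Complex.I * (A : ℂ)) + argS (k + Complex.I * (A : ℂ))) / 2 : ℝ) : ℂ))

open Complex Real

lemma abs_mul_exp_argS (w : ℂ) : (‖w‖ : ℂ) * Complex.exp (Complex.I * (argS w : ℂ)) = w := by
  have h : Complex.exp (Complex.I * (argS w : ℂ)) = Complex.exp (Complex.I * (Complex.arg w : ℂ)) := by
    unfold argS
    split_ifs with h
    · push_cast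
      rw [mul_add, Complex.exp_add]
      have : Complex.I * (2 * Real.pi) = 2 * Real.pi * Complex.I := by ring
      rw [this, Complex.exp_two_pi_mul_I, mul_one]
    · rfl
  rw [h, mul_comm Complex.I, Complex.norm_mul_exp_arg_mul_I]

lemma lamBr_sq (A : ℝ) (z : ℂ) : lamBr A z ^ 2 = z ^ 2 + (A : ℂ) ^ 2 := by
  unfold lamBr
  have h1 := abs_mul_exp_argS (z - Complex.I * (A : ℂ))
  have h2 := abs_mul_exp_argS (z + Complex.I * (A : ℂ))
  set r1 := ‖z - Complex.I * (A : ℂ)‖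
  set r2 := ‖z + Complex.I * (A : ℂ)‖
  set p1 := argS (z - Complex.I * (A : ℂ))
  set p2 := argS (z + Complex.I * (A : ℂ))
  have hs : ((Real.sqrt (r1 * r2) : ℂ)) ^ 2 = (r1 : ℂ) * (r2 : ℂ) := by
    rw [← Complex.ofReal_pow, Real.sq_sqrt (mul_nonneg (norm_nonneg _) (norm_nonneg _)),
      Complex.ofReal_mul]
  have he : Complex.exp (Complex.I * (((p1 + p2) / 2 : ℝ) : ℂ)) ^ 2
      = Complex.exp (Complex.I * (p1 : ℂ)) * Complex.exp (Complex.I * (p2 : ℂ)) := by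
    rw [← Complex.exp_add, ← Complex.exp_nat_mul]
    congr 1
    push_cast
    ring
  calc (((Real.sqrt (r1 * r2) : ℝ) : ℂ) * Complex.exp (Complex.I * (((p1 + p2) / 2 : ℝ) : ℂ))) ^ 2
      = ((Real.sqrt (r1 * r2) : ℂ)) ^ 2 * Complex.exp (Complex.I * (((p1 + p2) / 2 : ℝ) : ℂ)) ^ 2 := by ring
    _ = ((r1 : ℂ) * Complex.exp (Complex.I * (p1 : ℂ))) * ((r2 : ℂ) * Complex.exp (Complex.I * (p2 : ℂ))) := by
        rw [hs, he]; ring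
    _ = (z - Complex.I * (A : ℂ)) * (z + Complex.I * (A : ℂ)) := by rw [h1, h2]
    _ = z ^ 2 + (A : ℂ) ^ 2 := by
        have : (Complex.I) ^ 2 = -1 := Complex.I_sq
        ring_nf
        rw [Complex.I_sq]
        ring


lemma argS_of_re_pos {z : ℂ} (h : 0 < z.re) :
    argS z = Real.arctan (z.im / z.re) := by
  have habs : |Complex.arg z| < Real.pi / 2 := Complex.abs_arg_lt_pi_div_two_iff.2 (Or.inl h)
  have h1 := abs_lt.1 habs
  unfold argS
  rw [if_neg (by linarith), ← Complex.tan_arg,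
    Real.arctan_tan (by linarith) (by linarith)]

lemma argS_of_re_neg {z : ℂ} (h : z.re < 0) :
    argS z = Real.arctan (z.im / z.re) + Real.pi := by
  have hne : z ≠ 0 := fun hz => by simp [hz] at h
  have harctan : Real.arctan (z.im / z.re) = Real.arctan (Real.tan (Complex.arg z)) := by
    rw [Complex.tan_arg]
  rcases le_or_gt 0 z.im with him | him
  · -- arg ∈ (π/2, π], argS = arg
    have h1 : 0 ≤ Complex.arg z := Complex.arg_nonneg_iff.2 him
    have h2 : Complex.arg z ≤ Real.pi := Complex.arg_le_pi z
    have hpi2 : Real.pi / 2 < Complex.arg z := by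
      rcases lt_or_ge (Real.pi / 2) (Complex.arg z) with h' | h'
      · exact h'
      rcases eq_or_lt_of_le h' with h'' | h''
      · exact absurd (Complex.arg_eq_pi_div_two_iff.1 h'').1 (by linarith)
      · rcases Complex.arg_lt_pi_div_two_iff.1 h'' with h3 | h3 | h3
        · linarith
        · linarith
        · exact absurd h3 hne
    have hval : Real.arctan (Real.tan (Complex.arg z - Real.pi)) = Complex.arg z - Real.pi :=
      Real.arctan_tan (by linarith) (by linarith [Real.pi_pos])
    rw [Real.tan_sub_pi] at hval
    unfold argS
    rw [if_neg (by linarith [Real.pi_pos]), harctan, hval]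
    ring
  · -- arg ∈ (-π, -π/2), argS = arg + 2π
    have h1 : Complex.arg z < -(Real.pi / 2) := by
      rw [Complex.arg_of_re_neg_of_im_neg h him]
      have : Real.arcsin ((-z).im / ‖z‖) < Real.pi / 2 := by
        rw [Real.arcsin_lt_pi_div_two]
        rw [div_lt_one (norm_pos_iff.mpr hne)]
        calc (-z).im = -z.im := by simp
          _ ≤ |z.im| := by rw [abs_eq_max_neg]; exact le_max_right _ _
          _ < ‖z‖ := Complex.abs_im_lt_norm.2 h.ne
      linarith
    have h2 : -Real.pi < Complex.arg z := Complex.neg_pi_lt_arg z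
    have hval : Real.arctan (Real.tan (Complex.arg z + Real.pi)) = Complex.arg z + Real.pi :=
      Real.arctan_tan (by linarith [Real.pi_pos]) (by linarith)
    rw [Real.tan_add_pi] at hval
    unfold argS
    rw [if_pos h1, harctan, hval]
    ring


lemma argS_of_im_nonneg {z : ℂ} (h : 0 ≤ z.im) : argS z = Complex.arg z := by
  unfold argS
  rw [if_neg]
  push_neg
  have h1 : 0 ≤ Complex.arg z := Complex.arg_nonneg_iff.2 h
  linarith [Real.pi_pos]

lemma lamBr_bounds {A : ℝ} (hA : 0 < A) {z : ℂ} (hb : 0 < z.im)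
    (hcut : ¬(z.re = 0 ∧ |z.im| ≤ A)) :
    ‖lamBr A z - z‖ < A ∧ A < ‖lamBr A z + z‖ := by
  set w1 := z - Complex.I * (A : ℂ) with hw1
  set w2 := z + Complex.I * (A : ℂ) with hw2
  have hw1re : w1.re = z.re := by simp [hw1]
  have hw1im : w1.im = z.im - A := by simp [hw1]
  have hw2re : w2.re = z.re := by simp [hw2]
  have hw2im : w2.im = z.im + A := by simp [hw2]
  have hw2ne : w2 ≠ 0 := by
    intro h0
    have : w2.im = 0 := by rw [h0]; rfl
    rw [hw2im] at this; linarith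
  have hw1ne : w1 ≠ 0 := by
    intro h0
    have hre : w1.re = 0 := by rw [h0]; rfl
    have him : w1.im = 0 := by rw [h0]; rfl
    rw [hw1re] at hre; rw [hw1im] at him
    exact hcut ⟨hre, by rw [abs_of_pos hb]; linarith⟩
  have hzne : z ≠ 0 := fun h0 => by rw [h0] at hb; simp at hb
  -- bound on the angle difference
  have hD : -Real.pi < argS w1 + argS w2 - 2 * Complex.arg z ∧
      argS w1 + argS w2 - 2 * Complex.arg z < Real.pi := by
    rcases lt_trichotomy z.re 0 with ha | ha | ha
    · -- re z < 0
      have harg : Complex.arg z = Real.arctan (z.im / z.re) + Real.pi := by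
        rw [← argS_of_im_nonneg hb.le, argS_of_re_neg ha]
      have h1 : argS w1 = Real.arctan ((z.im - A) / z.re) + Real.pi := by
        rw [argS_of_re_neg (by rw [hw1re]; exact ha), hw1re, hw1im]
      have h2 : argS w2 = Real.arctan ((z.im + A) / z.re) + Real.pi := by
        rw [argS_of_re_neg (by rw [hw2re]; exact ha), hw2re, hw2im]
      have k1 : z.im / z.re < (z.im - A) / z.re := by
        have hdiff : (z.im - A) / z.re - z.im / z.re = -(A / z.re) := by
          ring
        have : A / z.re < 0 := div_neg_of_pos_of_neg hA ha
        linarith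
      have k2 : (z.im + A) / z.re < z.im / z.re := by
        have hdiff : (z.im + A) / z.re - z.im / z.re = A / z.re := by ring
        have : A / z.re < 0 := div_neg_of_pos_of_neg hA ha
        linarith
      have m1 : Real.arctan (z.im / z.re) < Real.arctan ((z.im - A) / z.re) :=
        Real.arctan_strictMono k1
      have m2 : Real.arctan ((z.im + A) / z.re) < Real.arctan (z.im / z.re) :=
        Real.arctan_strictMono k2
      have m3 : Real.arctan (z.im / z.re) < 0 := by
        have : z.im / z.re < 0 := div_neg_of_pos_of_neg hb ha
        have := Real.arctan_strictMono this
        rwa [Real.arctan_zero] at this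
      have b1 := Real.arctan_lt_pi_div_two ((z.im - A) / z.re)
      have b2 := Real.neg_pi_div_two_lt_arctan ((z.im + A) / z.re)
      have b3 := Real.neg_pi_div_two_lt_arctan (z.im / z.re)
      rw [h1, h2, harg]
      constructor <;> linarith
    · -- re z = 0 : z purely imaginary with im > A
      have hbA : A < z.im := by
        by_contra hle
        push_neg at hle
        exact hcut ⟨ha, by rw [abs_of_pos hb]; exact hle⟩
      have harg : Complex.arg z = Real.pi / 2 :=
        Complex.arg_eq_pi_div_two_iff.2 ⟨ha, hb⟩
      have h1 : argS w1 = Real.pi / 2 := by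
        rw [argS_of_im_nonneg (by rw [hw1im]; linarith),
          Complex.arg_eq_pi_div_two_iff.2 ⟨by rw [hw1re]; exact ha, by rw [hw1im]; linarith⟩]
      have h2 : argS w2 = Real.pi / 2 := by
        rw [argS_of_im_nonneg (by rw [hw2im]; linarith),
          Complex.arg_eq_pi_div_two_iff.2 ⟨by rw [hw2re]; exact ha, by rw [hw2im]; linarith⟩]
      rw [h1, h2, harg]
      constructor <;> linarith [Real.pi_pos]
    · -- re z > 0
      have harg : Complex.arg z = Real.arctan (z.im / z.re) := by
        rw [← argS_of_im_nonneg hb.le, argS_of_re_pos ha]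
      have h1 : argS w1 = Real.arctan ((z.im - A) / z.re) := by
        rw [argS_of_re_pos (by rw [hw1re]; exact ha), hw1re, hw1im]
      have h2 : argS w2 = Real.arctan ((z.im + A) / z.re) := by
        rw [argS_of_re_pos (by rw [hw2re]; exact ha), hw2re, hw2im]
      have k1 : (z.im - A) / z.re < z.im / z.re := by
        apply div_lt_div_of_pos_right ?_ ha
        · linarith
      have k2 : z.im / z.re < (z.im + A) / z.re := by
        apply div_lt_div_of_pos_right ?_ ha
        · linarith
      have m1 : Real.arctan ((z.im - A) / z.re) < Real.arctan (z.im / z.re) :=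
        Real.arctan_strictMono k1
      have m2 : Real.arctan (z.im / z.re) < Real.arctan ((z.im + A) / z.re) :=
        Real.arctan_strictMono k2
      have m3 : 0 < Real.arctan (z.im / z.re) := by
        have : (0:ℝ) < z.im / z.re := div_pos hb ha
        have := Real.arctan_strictMono this
        rwa [Real.arctan_zero] at this
      have b1 := Real.neg_pi_div_two_lt_arctan ((z.im - A) / z.re)
      have b2 := Real.arctan_lt_pi_div_two ((z.im + A) / z.re)
      have b3 := Real.arctan_lt_pi_div_two (z.im / z.re)
      rw [h1, h2, harg]
      constructor <;> linarith
  -- positivity of Re (λ * conj z)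
  set s := Real.sqrt (‖w1‖ * ‖w2‖) with hs
  set φ := (argS w1 + argS w2) / 2 with hφ
  have hspos : 0 < s :=
    Real.sqrt_pos.2 (mul_pos (norm_pos_iff.mpr hw1ne) (norm_pos_iff.mpr hw2ne))
  have hlam : lamBr A z = (s : ℂ) * Complex.exp (Complex.I * (φ : ℂ)) := rfl
  have hexp : Complex.exp (Complex.I * (φ : ℂ))
      = ((Real.cos φ : ℝ) : ℂ) + ((Real.sin φ : ℝ) : ℂ) * Complex.I := by
    rw [mul_comm, Complex.exp_mul_I]
    push_cast [Complex.ofReal_cos, Complex.ofReal_sin]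
    ring
  have hre : 0 < (lamBr A z * (starRingEnd ℂ) z).re := by
    have hre_eq : (lamBr A z * (starRingEnd ℂ) z).re
        = s * (Real.cos φ * z.re + Real.sin φ * z.im) := by
      rw [hlam, hexp]
      simp [Complex.mul_re, Complex.mul_im, Complex.add_re, Complex.add_im,
        Complex.conj_re, Complex.conj_im, Complex.cos_ofReal_re, Complex.sin_ofReal_re]
      ring
    rw [hre_eq]
    have hzr : z.re = ‖z‖ * Real.cos (Complex.arg z) :=
      (Complex.norm_mul_cos_arg z).symm
    have hzi : z.im = ‖z‖ * Real.sin (Complex.arg z) :=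
      (Complex.norm_mul_sin_arg z).symm
    have hcos : 0 < Real.cos (φ - Complex.arg z) := by
      apply Real.cos_pos_of_mem_Ioo
      constructor
      · simp only [hφ]; linarith [hD.1]
      · simp only [hφ]; linarith [hD.2]
    have : Real.cos φ * z.re + Real.sin φ * z.im
        = ‖z‖ * Real.cos (φ - Complex.arg z) := by
      rw [hzr, hzi, Real.cos_sub]
      ring
    rw [this]
    exact mul_pos hspos (mul_pos (norm_pos_iff.mpr hzne) hcos)
  -- |λ - z| < |λ + z|
  have hsq : (‖lamBr A z + z‖) ^ 2 - (‖lamBr A z - z‖) ^ 2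
      = 4 * (lamBr A z * (starRingEnd ℂ) z).re := by
    rw [Complex.sq_norm, Complex.sq_norm]
    simp [Complex.normSq_apply, Complex.mul_re, Complex.add_re, Complex.add_im,
      Complex.sub_re, Complex.sub_im, Complex.conj_re, Complex.conj_im]
    ring
  have h0m := norm_nonneg (lamBr A z - z)
  have h0p := norm_nonneg (lamBr A z + z)
  have hlt : ‖lamBr A z - z‖ < ‖lamBr A z + z‖ := by nlinarith
  have hprod : ‖lamBr A z - z‖ * ‖lamBr A z + z‖ = A ^ 2 := by
    rw [← norm_mul]
    have : (lamBr A z - z) * (lamBr A z + z) = ((A : ℂ)) ^ 2 := by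
      linear_combination lamBr_sq A z
    rw [this]
    rw [← Complex.ofReal_pow, Complex.norm_real, Real.norm_eq_abs, abs_of_pos (pow_pos hA 2)]
  constructor
  · nlinarith
  · nlinarith


/-- For `V ≠ 0`, `δ ∈ ℝ`, `0 < A₋ ≤ A₊`: for every `k` in the open upper half plane
not lying on either branch cut `Σ± = ∓V/2 + i[−A±, A±]`, one has
`(λ₊(k) − (k + V/2))·A₋·e^{−iδ} + (λ₋(k) + (k − V/2))·A₊·e^{iδ} ≠ 0`
(this quantity is, up to a nonvanishing factor, the analytic scattering coefficient
`s₂₂(k)` of the pure two-sided step initial condition: no discrete eigenvalues). -/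
theorem step_no_discrete_eigenvalues (Am Ap V δ : ℝ) (hV : V ≠ 0)
    (hm : 0 < Am) (hmp : Am ≤ Ap) (k : ℂ) (hup : 0 < k.im)
    (hcutP : ¬((k + (V : ℂ) / 2).re = 0 ∧ |(k + (V : ℂ) / 2).im| ≤ Ap))
    (hcutM : ¬((k - (V : ℂ) / 2).re = 0 ∧ |(k - (V : ℂ) / 2).im| ≤ Am)) :
    (lamBr Ap (k + (V : ℂ) / 2) - (k + (V : ℂ) / 2)) * (Am : ℂ) *
        Complex.exp (-(Complex.I * (δ : ℂ)))
      + (lamBr Am (k - (V : ℂ) / 2) + (k - (V : ℂ) / 2)) * (Ap : ℂ) *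
        Complex.exp (Complex.I * (δ : ℂ)) ≠ 0 := by
  have hp : 0 < Ap := lt_of_lt_of_le hm hmp
  set zp := k + (V : ℂ) / 2 with hzp
  set zm := k - (V : ℂ) / 2 with hzm
  have hVim : ((V : ℂ) / 2).im = 0 := by
    have : (V : ℂ) / 2 = ((V / 2 : ℝ) : ℂ) := by push_cast; ring
    rw [this, Complex.ofReal_im]
  have hzpim : 0 < zp.im := by
    rw [hzp, Complex.add_im, hVim]; simpa using hup
  have hzmim : 0 < zm.im := by
    rw [hzm, Complex.sub_im, hVim]; simpa using hup
  obtain ⟨hP, -⟩ := lamBr_bounds hp hzpim hcutP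
  obtain ⟨-, hM⟩ := lamBr_bounds hm hzmim hcutM
  intro hsum
  have heq : (lamBr Ap zp - zp) * (Am : ℂ) * Complex.exp (-(Complex.I * (δ : ℂ)))
      = -((lamBr Am zm + zm) * (Ap : ℂ) * Complex.exp (Complex.I * (δ : ℂ))) :=
    eq_neg_of_add_eq_zero_left hsum
  have habs := congrArg norm heq
  rw [norm_neg] at habs
  have e1 : ‖(lamBr Ap zp - zp) * (Am : ℂ) * Complex.exp (-(Complex.I * (δ : ℂ)))‖
      = ‖lamBr Ap zp - zp‖ * Am := by
    rw [norm_mul, norm_mul, Complex.norm_real, Real.norm_eq_abs, abs_of_pos hm, Complex.norm_exp]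
    have : (-(Complex.I * (δ : ℂ))).re = 0 := by simp
    rw [this, Real.exp_zero, mul_one]
  have e2 : ‖(lamBr Am zm + zm) * (Ap : ℂ) * Complex.exp (Complex.I * (δ : ℂ))‖
      = ‖lamBr Am zm + zm‖ * Ap := by
    rw [norm_mul, norm_mul, Complex.norm_real, Real.norm_eq_abs, abs_of_pos hp, Complex.norm_exp]
    have : (Complex.I * (δ : ℂ)).re = 0 := by simp
    rw [this, Real.exp_zero, mul_one]
  rw [e1, e2] at habs
  have c1 : ‖lamBr Ap zp - zp‖ * Am < Ap * Am :=
    mul_lt_mul_of_pos_right hP hm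
  have c2 : Am * Ap < ‖lamBr Am zm + zm‖ * Ap :=
    mul_lt_mul_of_pos_right hM hp
  have hcomm : Am * Ap = Ap * Am := mul_comm Am Ap
  linarith
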